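/- Let i be a buyer reporting her true type θ_i and let θ' = (θ_i, θ'_{-i}). Then her expected utility in PDA satisfies E_PDA(u_i) ≥ Σ_{B ⊆ V∖{i}} [|B|!·(|V|−|B|−1)!/|V|!] · μ(θ'_B) · (SW*(θ', B∪{i}) − SW*(θ', B)). Consequently, (inf_B μ(θ'_B)) · φ_i(θ') ≤ E_PDA(u_i) ≤ φ_i(θ'): the ratio between her expected PDA utility and her Shapley contribution is at least the infimum probability that all items remain unsold, and her expected utility never exceeds her Shapley contribution. -/

import Mathlib

namespace DA

open scoped Classical

/-- A report profile for selling `k` homogeneous items: each agent reports a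
valuation over quantities `0, …, k` and a set of neighbors. -/
structure Profile (V : Type*) (k : ℕ) where
  val : V → ℕ → ℝ
  nbr : V → Set V

/-- A valuation is valid if it is normalized (`v 0 = 0`) and has
non-increasing marginals on `{0, …, k}`. -/
def ValidVal (k : ℕ) (v : ℕ → ℝ) : Prop :=
  v 0 = 0 ∧ ∀ q : ℕ, q + 2 ≤ k → v (q + 2) - v (q + 1) ≤ v (q + 1) - v q

variable {V : Type*}

/-- A profile is valid (w.r.t. seller `s`) if every buyer's valuation is valid. -/
def Profile.Valid {k : ℕ} (θ : Profile V k) (s : V) : Prop :=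
  ∀ i : V, i ≠ s → ValidVal k (θ.val i)

/-- The reported (undirected) adjacency: `{i, j}` is an edge whenever
`j ∈ r'_i` (or symmetrically `i ∈ r'_j`). -/
def Profile.adj {k : ℕ} (θ : Profile V k) (i j : V) : Prop :=
  j ∈ θ.nbr i ∨ i ∈ θ.nbr j

/-- The feasible set `F(θ', B)` of a coalition `B`: the buyers in `B` that are
connected to the seller `s` by a path of reported edges lying inside `B`
(empty if `s ∉ B`). -/
def Profile.feasible {k : ℕ} (θ : Profile V k) (s : V) (B : Set V) : Set V :=
  {i | i ≠ s ∧ i ∈ B ∧ s ∈ B ∧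
    Relation.ReflTransGen (fun a b => θ.adj a b ∧ a ∈ B ∧ b ∈ B) s i}

/-- Updating agent `i`'s report in a profile. -/
def updateAgent [DecidableEq V] {k : ℕ} (θ : Profile V k) (i : V)
    (v : ℕ → ℝ) (r : Set V) : Profile V k :=
  ⟨Function.update θ.val i v, Function.update θ.nbr i r⟩

/-- The profile `θ'_B` obtained by removing (setting to nil) the reports of
all agents outside the coalition `B`. -/
noncomputable def Profile.restrict {k : ℕ} (θ : Profile V k) (B : Set V) : Profile V k :=
  ⟨fun i q => if i ∈ B then θ.val i q else 0,
   fun i => if i ∈ B then θ.nbr i ∩ B else ∅⟩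

section Homogeneous

variable [Fintype V] [DecidableEq V]

/-- Social welfare of an allocation `π` under reports `θ`. -/
def SW {k : ℕ} (θ : Profile V k) (s : V) (π : V → ℕ) : ℝ :=
  ∑ i ∈ Finset.univ.erase s, θ.val i (π i)

/-- The allocations admissible for a coalition `B` with irrevocable prior
allocation `πhat`: at most `k` items in total are allocated (none to the
seller), only buyers in `F(θ, B)` receive items, and nobody receives fewer
items than in `πhat`. -/
def feasAllocs {k : ℕ} (θ : Profile V k) (s : V) (B : Set V) (πhat : V → ℕ) :
    Set (V → ℕ) :=
  {π | π s = 0 ∧ (∑ i ∈ Finset.univ.erase s, π i) ≤ k ∧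
    (∀ i, i ∉ θ.feasible s B → π i = 0) ∧ ∀ j, j ≠ s → πhat j ≤ π j}

/-- `SW*(θ, B, πhat)`: the maximum social welfare over the admissible
allocations for coalition `B` with prior allocation `πhat`. -/
noncomputable def SWstar {k : ℕ} (θ : Profile V k) (s : V) (B : Set V)
    (πhat : V → ℕ) : ℝ :=
  sSup (SW θ s '' feasAllocs θ s B πhat)

/-- A chosen allocation attaining `SW*(θ, B, πhat)`. -/
noncomputable def bestAlloc {k : ℕ} (θ : Profile V k) (s : V) (B : Set V)
    (πhat : V → ℕ) : V → ℕ :=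
  Classical.epsilon fun π =>
    π ∈ feasAllocs θ s B πhat ∧ SW θ s π = SWstar θ s B πhat

/-- `o_{≺i}`: the set of agents strictly preceding `i` in the order `o`. -/
def pred (o : V ≃ Fin (Fintype.card V)) (i : V) : Set V := {j | o j < o i}

/-- `o_{≼i} = o_{≺i} ∪ {i}`. -/
def predeq (o : V ≃ Fin (Fintype.card V)) (i : V) : Set V := {j | o j ≤ o i}

/-- The partial allocation produced by PDA after the first `t` agents of the
order `o` have been traversed: the seller is skipped, and each traversed buyer
`i` receives her share in a chosen allocation attaining
`SW*(θ, o_{≼i}, π^{o≺i})`, earlier allocations being irrevocable. -/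
noncomputable def pdaStep {k : ℕ} (θ : Profile V k) (s : V)
    (o : V ≃ Fin (Fintype.card V)) : ℕ → V → ℕ
  | 0 => fun _ => 0
  | t + 1 =>
    if h : t < Fintype.card V then
      let i := o.symm ⟨t, h⟩
      if i = s then pdaStep θ s o t
      else Function.update (pdaStep θ s o t) i
        (bestAlloc θ s (predeq o i) (pdaStep θ s o t) i)
    else pdaStep θ s o t

/-- `π^{o≺i}`: the allocation fixed by PDA right before agent `i` is traversed. -/
noncomputable def pdaPrior {k : ℕ} (θ : Profile V k) (s : V)
    (o : V ≃ Fin (Fintype.card V)) (i : V) : V → ℕ :=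
  pdaStep θ s o (o i : ℕ)

/-- The final allocation `π^o` produced by PDA under the order `o`. -/
noncomputable def pdaAlloc {k : ℕ} (θ : Profile V k) (s : V)
    (o : V ≃ Fin (Fintype.card V)) : V → ℕ :=
  pdaStep θ s o (Fintype.card V)

/-- The payment charged by PDA to agent `i` under the order `o`:
`p_i = SW*(θ, o_{≺i}, π^{o≺i}) − SW*(θ, o_{≼i}, π^{o≺i}) + v'_i(π_i)`, except
that agents traversed after all `k` items have been allocated pay `0`
(and the seller pays nothing). -/
noncomputable def pdaPay {k : ℕ} (θ : Profile V k) (s : V)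
    (o : V ≃ Fin (Fintype.card V)) (i : V) : ℝ :=
  if i = s then 0
  else if (∑ j ∈ Finset.univ.erase s, pdaPrior θ s o i j) = k then 0
  else SWstar θ s (pred o i) (pdaPrior θ s o i)
    - SWstar θ s (predeq o i) (pdaPrior θ s o i)
    + θ.val i (pdaAlloc θ s o i)

/-- `u_i^o`: the utility of buyer `i` with true valuation `v` under order `o`. -/
noncomputable def pdaUtil {k : ℕ} (v : ℕ → ℝ) (θ : Profile V k) (s : V)
    (o : V ≃ Fin (Fintype.card V)) (i : V) : ℝ :=
  v (pdaAlloc θ s o i) - pdaPay θ s o i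

/-- `E_PDA(u_i)`: buyer `i`'s expected utility over the uniformly random order. -/
noncomputable def pdaExpUtil {k : ℕ} (v : ℕ → ℝ) (θ : Profile V k) (s : V)
    (i : V) : ℝ :=
  (∑ o : V ≃ Fin (Fintype.card V), pdaUtil v θ s o i) /
    ((Fintype.card V).factorial : ℝ)

/-- `μ(θ)`: the fraction of orders for which PDA terminates with no item sold. -/
noncomputable def mu {k : ℕ} (θ : Profile V k) (s : V) : ℝ :=
  (Nat.card {o : V ≃ Fin (Fintype.card V) // ∀ j, pdaAlloc θ s o j = 0} : ℝ) /
    ((Fintype.card V).factorial : ℝ)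

/-- The Shapley contribution `φ_i(θ)` of agent `i`. -/
noncomputable def shapley {k : ℕ} (θ : Profile V k) (s : V) (i : V) : ℝ :=
  ∑ B ∈ (Finset.univ.erase i).powerset,
    ((B.card.factorial * (Fintype.card V - B.card - 1).factorial : ℝ) /
      ((Fintype.card V).factorial : ℝ)) *
    (SWstar θ s (↑(insert i B)) 0 - SWstar θ s (↑B) 0)

end Homogeneous

end DA

/-!
For an order in which buyer `i` is preceded exactly by the coalition `B`, her PDA utility is the
marginal contribution `SW*(B ∪ {i}, π) - SW*(B, π)` computed with the allocation `π` fixed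
before her turn (or `0` once everything is sold). Because valuations are concave, an exchange
argument shows that this marginal contribution can only shrink when some items are already
committed, so it is at most `SW*(B ∪ {i}) - SW*(B)`. Exactly `|B|! (|V| - |B| - 1)!` orders have
predecessor set `B`, which gives the upper bound `E(u_i) ≤ φ_i`.

For the lower bound, the allocation fixed before `i`'s turn is the final allocation of PDA run on
`θ'_B`, and whether that run sells nothing depends only on the relative order of `B`. This
relative order is uniformly distributed, also conditionally on `B` being the predecessor set of
`i`, so with probability `μ(θ'_B)` nothing is sold before `i` and she earns the full marginal
contribution `SW*(B ∪ {i}) - SW*(B)`.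
-/

namespace DA

open Finset Function
open scoped Nat

variable {V : Type*} {k : ℕ}

lemma ValidVal.marginal_antitone {v : ℕ → ℝ} (hv : ValidVal k v) {p q : ℕ} (hpq : p ≤ q)
    (hq : q + 1 ≤ k) : v (q + 1) - v q ≤ v (p + 1) - v p := by
  induction q, hpq using Nat.le_induction with
  | base => exact le_rfl
  | succ n _ ih => exact (hv.2 n (by omega)).trans (ih (by omega))

section Network

variable (θ : Profile V k) (s : V)

lemma Profile.feasible_mono {B B' : Set V} (h : B ⊆ B') :
    θ.feasible s B ⊆ θ.feasible s B' := by
  rintro x ⟨hx, hxB, hsB, hr⟩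
  exact ⟨hx, h hxB, h hsB,
    Relation.ReflTransGen.mono (fun a b hab => ⟨hab.1, h hab.2.1, h hab.2.2⟩) _ _ hr⟩

lemma Profile.feasible_subset (B : Set V) : θ.feasible s B ⊆ B :=
  fun _ hx => hx.2.1

lemma Profile.restrict_adj {B : Set V} {a b : V} :
    (θ.restrict B).adj a b ↔ a ∈ B ∧ b ∈ B ∧ θ.adj a b := by
  by_cases ha : a ∈ B <;> by_cases hb : b ∈ B <;> simp [Profile.adj, Profile.restrict, ha, hb]

lemma Profile.restrict_feasible (B C : Set V) :
    (θ.restrict B).feasible s C = θ.feasible s (C ∩ B) := by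
  ext x
  constructor
  · rintro ⟨hxs, -, -, hpath⟩
    have hp := Relation.ReflTransGen.mono (fun a b ⟨h, ha, hb⟩ =>
      have ⟨haB, hbB, hadj⟩ := θ.restrict_adj.1 h
      (⟨hadj, ⟨ha, haB⟩, ⟨hb, hbB⟩⟩ : θ.adj a b ∧ a ∈ C ∩ B ∧ b ∈ C ∩ B)) _ _ hpath
    obtain ⟨_, hs, -⟩ := (Relation.ReflTransGen.cases_head_iff.1 hp).resolve_left (Ne.symm hxs)
    obtain ⟨_, -, hx⟩ := ((Relation.ReflTransGen.cases_tail_iff _ _ _).1 hp).resolve_left hxs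
    exact ⟨hxs, hx.2.2, hs.2.1, hp⟩
  · rintro ⟨hxs, hx, hs, hpath⟩
    exact ⟨hxs, hx.1, hs.1, Relation.ReflTransGen.mono (fun a b ⟨hadj, ha, hb⟩ =>
      ⟨θ.restrict_adj.2 ⟨ha.2, hb.2, hadj⟩, ha.1, hb.1⟩) _ _ hpath⟩

lemma Profile.restrict_feasible_subset (B C : Set V) : (θ.restrict B).feasible s C ⊆ B := by
  rw [restrict_feasible]
  exact (θ.feasible_subset s _).trans Set.inter_subset_right

end Network

lemma sum_powerset_factorial_mul_factorial {α : Type*} (S : Finset α) :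
    ∑ B ∈ S.powerset, (#B)! * (#S - #B)! = (#S + 1)! := by
  rw [sum_powerset_apply_card (fun m => m ! * (#S - m)!)]
  calc ∑ m ∈ range (#S + 1), (#S).choose m • (m ! * (#S - m)!)
      = ∑ _m ∈ range (#S + 1), (#S)! := sum_congr rfl fun m hm => by
        rw [smul_eq_mul, ← mul_assoc]
        exact Nat.choose_mul_factorial_mul_factorial (Nat.lt_succ_iff.1 (mem_range.1 hm))
    _ = (#S + 1)! := by simp [Nat.factorial_succ]

section Orders

variable [Fintype V] (o : V ≃ Fin (Fintype.card V))

lemma pred_eq_setOf (i : V) : pred o i = {a | (o a : ℕ) < o i} := rfl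

lemma predeq_eq_setOf (i : V) : predeq o i = {a | (o a : ℕ) < o i + 1} :=
  Set.ext fun _ => Nat.lt_succ_iff.symm

lemma pred_subset_predeq (i : V) : pred o i ⊆ predeq o i :=
  Set.ofPred_subset_ofPred.2 fun _ => le_of_lt

def predFinset (i : V) : Finset V := {j | o j < o i}

lemma coe_predFinset (i : V) : (predFinset o i : Set V) = pred o i := by
  ext
  simp [predFinset, pred]

lemma predFinset_mem_powerset [DecidableEq V] (i : V) :
    predFinset o i ∈ (univ.erase i).powerset := by
  simp only [mem_powerset, subset_iff, predFinset, mem_filter, mem_univ, true_and, mem_erase,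
    and_true]
  rintro j hj rfl
  exact lt_irrefl _ hj

lemma predeq_eq_insert_pred (i : V) : predeq o i = insert i (pred o i) := by
  ext x
  simp [predeq, pred, le_iff_lt_or_eq, or_comm]

def rank (B : Finset V) (x : V) : ℕ := #{y ∈ B | o y < o x}

variable {o} {B : Finset V}

lemma rank_lt_rank {x y : V} (hx : x ∈ B) (h : o x < o y) : rank o B x < rank o B y := by
  refine card_lt_card ((ssubset_iff_of_subset fun z hz => ?_).2 ⟨x, ?_, ?_⟩)
  · simp only [mem_filter] at hz ⊢
    exact ⟨hz.1, hz.2.trans h⟩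
  · simp [hx, h]
  · simp

lemma rank_lt_card {x : V} (hx : x ∈ B) : rank o B x < #B :=
  card_lt_card ((ssubset_iff_of_subset (filter_subset _ _)).2 ⟨x, hx, by simp⟩)

lemma rank_lt_rank_iff {x y : V} (hx : x ∈ B) (hy : y ∈ B) :
    rank o B x < rank o B y ↔ o x < o y := by
  refine ⟨fun h => lt_of_not_ge fun h' => h.not_ge ?_, rank_lt_rank hx⟩
  rcases h'.eq_or_lt with h' | h'
  · rw [o.injective h']
  · exact (rank_lt_rank hy h').le

variable (o B)

noncomputable def relOrder : {x // x ∈ B} ≃ Fin #B :=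
  Equiv.ofBijective (fun x => ⟨rank o B x, rank_lt_card x.2⟩) <|
    (Fintype.bijective_iff_injective_and_card _).2 ⟨fun x y h => by
      by_contra hne
      rcases lt_or_gt_of_ne (o.injective.ne (Subtype.coe_injective.ne hne)) with hl | hl
      · exact (rank_lt_rank x.2 hl).ne (congrArg Fin.val h)
      · exact (rank_lt_rank y.2 hl).ne' (congrArg Fin.val h), by simp⟩

variable {o B}

lemma relOrder_lt_iff (x y : {x // x ∈ B}) : relOrder o B x < relOrder o B y ↔ o x < o y :=
  rank_lt_rank_iff x.2 y.2

lemma relOrder_le_iff (x y : {x // x ∈ B}) : relOrder o B x ≤ relOrder o B y ↔ o x ≤ o y := by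
  simpa only [not_lt] using (relOrder_lt_iff y x).not

lemma relOrder_eq_of_lt_iff (σ : {x // x ∈ B} ≃ Fin #B)
    (h : ∀ x y : {x // x ∈ B}, o x < o y ↔ σ x < σ y) : relOrder o B = σ := by
  ext x
  change rank o B x = σ x
  rw [rank, ← Fin.card_Iio (σ x)]
  refine card_bij' (fun y hy => σ ⟨y, (mem_filter.1 hy).1⟩) (fun p _ => (σ.symm p : V))
    (fun y hy => ?_) (fun p hp => ?_) (fun _ _ => by simp) (fun _ _ => by simp)
  · simpa using (h ⟨y, (mem_filter.1 hy).1⟩ x).1 (mem_filter.1 hy).2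
  · simpa [h] using hp

lemma relOrder_ofSubtype [DecidableEq V] (π : Equiv.Perm {x // x ∈ B}) :
    relOrder ((Equiv.Perm.ofSubtype π).trans o) B = π.trans (relOrder o B) :=
  relOrder_eq_of_lt_iff _ fun x y => by
    simp [Equiv.Perm.ofSubtype_apply_of_mem, relOrder_lt_iff]

lemma predeq_inter_eq_of_relOrder_eq {o' : V ≃ Fin (Fintype.card V)}
    (h : relOrder o B = relOrder o' B) {a : V} (ha : a ∈ B) :
    predeq o a ∩ ↑B = predeq o' a ∩ ↑B := by
  ext x
  refine and_congr_left fun hx => ?_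
  have := relOrder_le_iff (o := o) ⟨x, hx⟩ ⟨a, ha⟩
  rw [h, relOrder_le_iff] at this
  exact this.symm

end Orders

section Counting

variable [Fintype V] [DecidableEq V] {B : Finset V} {i : V} (hi : i ∉ B)

lemma card_subtype_notMem_ne :
    Fintype.card {y : {x // x ∉ B} // y ≠ ⟨i, hi⟩} = Fintype.card V - #B - 1 := by
  simp [Fintype.card_subtype_compl, Fintype.card_coe]

/-- The order listing `B` as `σ` does, then `i`, then the remaining agents as `τ` does. -/
noncomputable def mkOrder (σ : {x // x ∈ B} ≃ Fin #B)
    (τ : {y : {x // x ∉ B} // y ≠ ⟨i, hi⟩} ≃ Fin (Fintype.card V - #B - 1)) :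
    V ≃ Fin (Fintype.card V) :=
  (Equiv.sumCompl (· ∈ B)).symm.trans <|
    (Equiv.sumCongr σ ((Equiv.optionSubtypeNe ⟨i, hi⟩).symm.trans
      ((Equiv.optionCongr τ).trans (finSuccEquiv _).symm))).trans <|
    finSumFinEquiv.trans (finCongr (by have := card_lt_univ_of_notMem hi; omega))

variable (σ : {x // x ∈ B} ≃ Fin #B)
  (τ : {y : {x // x ∉ B} // y ≠ ⟨i, hi⟩} ≃ Fin (Fintype.card V - #B - 1))

lemma mkOrder_apply_of_mem {x : V} (hx : x ∈ B) : (mkOrder hi σ τ x : ℕ) = σ ⟨x, hx⟩ := by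
  simp [mkOrder, Equiv.sumCompl_symm_apply_of_pos hx]

lemma mkOrder_apply_self : (mkOrder hi σ τ i : ℕ) = #B := by
  simp [mkOrder, Equiv.sumCompl_symm_apply_of_neg hi]

lemma mkOrder_apply_of_ne (y : {y : {x // x ∉ B} // y ≠ ⟨i, hi⟩}) :
    (mkOrder hi σ τ y : ℕ) = #B + (τ y + 1) := by
  simp [mkOrder, Equiv.sumCompl_symm_apply_of_neg y.1.2, Equiv.optionSubtypeNe_symm_of_ne y.2]

lemma card_le_mkOrder_apply {x : V} (hx : x ∉ B) : #B ≤ mkOrder hi σ τ x := by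
  simp [mkOrder, Equiv.sumCompl_symm_apply_of_neg hx]

lemma predFinset_mkOrder : predFinset (mkOrder hi σ τ) i = B := by
  ext x
  simp only [predFinset, mem_filter, mem_univ, true_and, Fin.lt_def, mkOrder_apply_self]
  by_cases hx : x ∈ B
  · simp [hx, mkOrder_apply_of_mem]
  · simpa [hx] using card_le_mkOrder_apply hi σ τ hx

lemma relOrder_mkOrder : relOrder (mkOrder hi σ τ) B = σ :=
  relOrder_eq_of_lt_iff σ fun x y => by
    rw [Fin.lt_def, Fin.lt_def, mkOrder_apply_of_mem hi σ τ x.2, mkOrder_apply_of_mem hi σ τ y.2]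

lemma mkOrder_injective :
    Injective fun p : ({x // x ∈ B} ≃ Fin #B) ×
      ({y : {x // x ∉ B} // y ≠ ⟨i, hi⟩} ≃ Fin (Fintype.card V - #B - 1)) =>
        mkOrder hi p.1 p.2 := by
  rintro ⟨σ, τ⟩ ⟨σ', τ'⟩ h
  simp only at h
  have hσ : σ = σ' := by rw [← relOrder_mkOrder hi σ τ, h, relOrder_mkOrder]
  subst hσ
  refine Prod.ext rfl (Equiv.ext fun y => Fin.ext ?_)
  have := congrArg (fun o : V ≃ Fin (Fintype.card V) => (o y : ℕ)) h
  simp only [mkOrder_apply_of_ne] at this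
  simpa using this

/-- The relative order of `B` is uniformly distributed. -/
lemma card_relOrder_mul_le (P : ({x // x ∈ B} ≃ Fin #B) → Prop) [DecidablePred P] :
    #{o : V ≃ Fin (Fintype.card V) | P (relOrder o B)} * (#B)!
      ≤ (Fintype.card V)! * Fintype.card {σ // P σ} := by
  have hinj : Injective fun p : {o : V ≃ Fin (Fintype.card V) // P (relOrder o B)} ×
      Equiv.Perm {x // x ∈ B} =>
        ((Equiv.Perm.ofSubtype p.2).trans p.1.1, (⟨relOrder p.1.1 B, p.1.2⟩ : {σ // P σ})) := by
    rintro ⟨⟨o, ho⟩, π⟩ ⟨⟨o', ho'⟩, π'⟩ h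
    simp only [Prod.mk.injEq, Subtype.mk.injEq] at h
    obtain ⟨h, hrel⟩ := h
    have hπ : π = π' := by
      have := congrArg (relOrder · B) h
      simp only [relOrder_ofSubtype, hrel] at this
      exact Equiv.ext fun x => (relOrder o' B).injective (by simpa using congrArg (· x) this)
    subst hπ
    have ho : o = o' := Equiv.ext fun x => by
      simpa using congrArg (· ((Equiv.Perm.ofSubtype π).symm x)) h
    subst ho
    rfl
  have := Fintype.card_le_of_injective _ hinj
  rwa [Fintype.card_prod, Fintype.card_prod, Fintype.card_perm, Fintype.card_coe,
    Fintype.card_equiv (Fintype.equivFin V), Fintype.card_subtype] at this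

/-- Conditionally on `B` being the predecessor set of `i`, the relative order of `B` is still
uniformly distributed. -/
lemma card_mul_factorial_le_card_predFinset_eq (hi : i ∉ B) (P : ({x // x ∈ B} ≃ Fin #B) → Prop)
    [DecidablePred P] :
    Fintype.card {σ // P σ} * (Fintype.card V - #B - 1)!
      ≤ #{o : V ≃ Fin (Fintype.card V) | predFinset o i = B ∧ P (relOrder o B)} := by
  let T := {y : {x // x ∉ B} // y ≠ ⟨i, hi⟩}
  let f : {σ // P σ} × (T ≃ Fin (Fintype.card V - #B - 1)) →
      {o : V ≃ Fin (Fintype.card V) // predFinset o i = B ∧ P (relOrder o B)} :=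
    fun p => ⟨mkOrder hi p.1.1 p.2, predFinset_mkOrder hi _ _, by
      rw [relOrder_mkOrder]; exact p.1.2⟩
  have hf : Injective f := fun p q h => by
    have := mkOrder_injective hi (a₁ := (p.1.1, p.2)) (a₂ := (q.1.1, q.2))
      (congrArg Subtype.val h)
    exact Prod.ext (Subtype.ext (congrArg Prod.fst this)) (congrArg Prod.snd this :)
  calc Fintype.card {σ // P σ} * (Fintype.card V - #B - 1)!
      = Fintype.card ({σ // P σ} × (T ≃ Fin (Fintype.card V - #B - 1))) := by
        rw [Fintype.card_prod,
          Fintype.card_equiv (Fintype.equivFinOfCardEq (card_subtype_notMem_ne hi)),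
          card_subtype_notMem_ne hi]
    _ ≤ _ := Fintype.card_le_of_injective f hf
    _ = _ := Fintype.card_subtype _

lemma card_mul_le_card_predFinset_eq (hi : i ∉ B) (P : ({x // x ∈ B} ≃ Fin #B) → Prop)
    [DecidablePred P] :
    #{o : V ≃ Fin (Fintype.card V) | P (relOrder o B)} * ((#B)! * (Fintype.card V - #B - 1)!)
      ≤ (Fintype.card V)! *
        #{o : V ≃ Fin (Fintype.card V) | predFinset o i = B ∧ P (relOrder o B)} :=
  calc _ = #{o : V ≃ Fin (Fintype.card V) | P (relOrder o B)} * (#B)!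
        * (Fintype.card V - #B - 1)! := by ring
    _ ≤ (Fintype.card V)! * Fintype.card {σ // P σ} * (Fintype.card V - #B - 1)! :=
        Nat.mul_le_mul_right _ (card_relOrder_mul_le P)
    _ = (Fintype.card V)! * (Fintype.card {σ // P σ} * (Fintype.card V - #B - 1)!) := by ring
    _ ≤ _ := Nat.mul_le_mul_left _ (card_mul_factorial_le_card_predFinset_eq hi P)

lemma card_predFinset_eq (hB : B ∈ (univ.erase i).powerset) :
    #{o : V ≃ Fin (Fintype.card V) | predFinset o i = B} = (#B)! * (Fintype.card V - #B - 1)! := by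
  -- the count is at least the weight for every `B`, and both sum to `|V|!` over `B`
  have hle : ∀ B ∈ (univ.erase i).powerset,
      (#B)! * (Fintype.card V - #B - 1)!
        ≤ #{o : V ≃ Fin (Fintype.card V) | predFinset o i = B} := by
    intro B hB
    have hi : i ∉ B := fun h => by simpa using mem_powerset.1 hB h
    simpa [Fintype.card_equiv B.equivFin] using
      card_mul_factorial_le_card_predFinset_eq hi (fun _ => True)
  have hsum : ∑ B ∈ (univ.erase i).powerset, (#B)! * (Fintype.card V - #B - 1)!
      = ∑ B ∈ (univ.erase i).powerset, #{o : V ≃ Fin (Fintype.card V) | predFinset o i = B} := by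
    rw [← card_eq_sum_card_fiberwise fun o _ => predFinset_mem_powerset o i, card_univ,
      Fintype.card_equiv (Fintype.equivFin V)]
    have hcard : #(univ.erase i) + 1 = Fintype.card V := by
      rw [card_erase_of_mem (mem_univ i), card_univ]
      exact Nat.sub_add_cancel (Fintype.card_pos_iff.2 ⟨i⟩)
    rw [← hcard, ← sum_powerset_factorial_mul_factorial]
    refine sum_congr rfl fun B _ => ?_
    congr 2
    omega
  exact ((sum_eq_sum_iff_of_le hle).1 hsum B hB).symm

end Counting

variable [Fintype V] [DecidableEq V]

section Welfare

variable (θ : Profile V k) (s : V)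

lemma zero_mem_feasAllocs (B : Set V) : (0 : V → ℕ) ∈ feasAllocs θ s B 0 :=
  ⟨rfl, by simp, fun _ _ => rfl, fun _ _ => le_rfl⟩

lemma apply_le_sum_of_mem_feasAllocs {B : Set V} {ρ π : V → ℕ}
    (hπ : π ∈ feasAllocs θ s B ρ) (j : V) : π j ≤ ∑ i ∈ univ.erase s, π i := by
  rcases eq_or_ne j s with rfl | hj
  · simp [hπ.1]
  · exact single_le_sum (fun _ _ => Nat.zero_le _) (mem_erase.2 ⟨hj, mem_univ _⟩)

lemma feasAllocs_finite (B : Set V) (ρ : V → ℕ) : (feasAllocs θ s B ρ).Finite :=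
  (Set.finite_Iic (fun _ => k : V → ℕ)).subset fun _ hπ j =>
    (apply_le_sum_of_mem_feasAllocs θ s hπ j).trans hπ.2.1

lemma SW_le_SWstar {B : Set V} {ρ π : V → ℕ} (h : π ∈ feasAllocs θ s B ρ) :
    SW θ s π ≤ SWstar θ s B ρ :=
  le_csSup ((feasAllocs_finite θ s B ρ).image _).bddAbove ⟨π, h, rfl⟩

lemma bestAlloc_spec {B : Set V} {ρ : V → ℕ} (h : (feasAllocs θ s B ρ).Nonempty) :
    bestAlloc θ s B ρ ∈ feasAllocs θ s B ρ ∧ SW θ s (bestAlloc θ s B ρ) = SWstar θ s B ρ :=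
  Classical.epsilon_spec ((h.image _).csSup_mem ((feasAllocs_finite θ s B ρ).image _))

lemma bestAlloc_apply_of_notMem_feasible {B : Set V} {ρ : V → ℕ}
    (h : (feasAllocs θ s B ρ).Nonempty) {a : V} (ha : a ∉ θ.feasible s B) :
    bestAlloc θ s B ρ a = 0 :=
  (bestAlloc_spec θ s h).1.2.2.1 a ha

lemma SWstar_le_SWstar {B B' : Set V} {ρ ρ' : V → ℕ}
    (hsub : feasAllocs θ s B ρ ⊆ feasAllocs θ s B' ρ') (hne : (feasAllocs θ s B ρ).Nonempty) :
    SWstar θ s B ρ ≤ SWstar θ s B' ρ' :=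
  csSup_le_csSup ((feasAllocs_finite θ s B' ρ').image _).bddAbove (hne.image _)
    (Set.image_mono hsub)

lemma feasAllocs_mono {B B' : Set V} (h : B ⊆ B') (ρ : V → ℕ) :
    feasAllocs θ s B ρ ⊆ feasAllocs θ s B' ρ :=
  fun _ ⟨h1, h2, h3, h4⟩ => ⟨h1, h2, fun i hi => h3 i (hi <| θ.feasible_mono s h ·), h4⟩

lemma mem_feasAllocs_of_le {B : Set V} {ρ ρ' π : V → ℕ} (hπ : π ∈ feasAllocs θ s B ρ)
    (h : ∀ j, j ≠ s → ρ' j ≤ π j) : π ∈ feasAllocs θ s B ρ' :=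
  ⟨hπ.1, hπ.2.1, hπ.2.2.1, h⟩

lemma SWstar_mono {B B' : Set V} (h : B ⊆ B') {ρ : V → ℕ} (hρ : ρ ∈ feasAllocs θ s B ρ) :
    SWstar θ s B ρ ≤ SWstar θ s B' ρ :=
  SWstar_le_SWstar θ s (feasAllocs_mono θ s h ρ) ⟨ρ, hρ⟩

lemma SWstar_zero_mono {B B' : Set V} (h : B ⊆ B') : SWstar θ s B 0 ≤ SWstar θ s B' 0 :=
  SWstar_mono θ s h (zero_mem_feasAllocs θ s B)

lemma feasAllocs_restrict (B C : Set V) (ρ : V → ℕ) :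
    feasAllocs (θ.restrict B) s C ρ = feasAllocs θ s (C ∩ B) ρ := by
  rw [feasAllocs, θ.restrict_feasible, feasAllocs]

lemma SW_restrict (hθ : θ.Valid s) {B : Set V} {π : V → ℕ} (hπ : ∀ j ∉ B, π j = 0) :
    SW (θ.restrict B) s π = SW θ s π :=
  sum_congr rfl fun j hj => by
    by_cases hjB : j ∈ B
    · simp [Profile.restrict, hjB]
    · simp [Profile.restrict, hjB, hπ j hjB, (hθ j (mem_erase.1 hj).1).1]

lemma SW_restrict_of_mem_feasAllocs (hθ : θ.Valid s) {B C : Set V} {ρ π : V → ℕ}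
    (hπ : π ∈ feasAllocs θ s (C ∩ B) ρ) : SW (θ.restrict B) s π = SW θ s π :=
  SW_restrict θ s hθ fun j hj => hπ.2.2.1 j fun h => hj (θ.feasible_subset s _ h).2

lemma SWstar_restrict (hθ : θ.Valid s) (B C : Set V) (ρ : V → ℕ) :
    SWstar (θ.restrict B) s C ρ = SWstar θ s (C ∩ B) ρ := by
  rw [SWstar, feasAllocs_restrict, Set.image_congr fun _ hπ =>
    SW_restrict_of_mem_feasAllocs θ s hθ hπ, SWstar]

lemma bestAlloc_restrict (hθ : θ.Valid s) (B C : Set V) (ρ : V → ℕ) :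
    bestAlloc (θ.restrict B) s C ρ = bestAlloc θ s (C ∩ B) ρ := by
  simp only [bestAlloc, feasAllocs_restrict, SWstar_restrict θ s hθ]
  congr 1
  ext π
  exact and_congr_right fun hπ => by rw [SW_restrict_of_mem_feasAllocs θ s hθ hπ]

end Welfare

section Exchange

variable (θ : Profile V k) (s : V)

lemma sum_update_add (π : V → ℕ) {c : V} (hc : c ≠ s) (m : ℕ) :
    ∑ j ∈ univ.erase s, update π c m j + π c = ∑ j ∈ univ.erase s, π j + m := by
  have hmem : c ∈ univ.erase s := mem_erase.2 ⟨hc, mem_univ _⟩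
  rw [sum_update_of_mem hmem, sum_eq_add_sum_sdiff_singleton_of_mem hmem]
  ring

lemma SW_update (π : V → ℕ) {c : V} (hc : c ≠ s) (m : ℕ) :
    SW θ s (update π c m) = SW θ s π - θ.val c (π c) + θ.val c m := by
  have hmem : c ∈ univ.erase s := mem_erase.2 ⟨hc, mem_univ _⟩
  simp only [SW, apply_update (fun j => θ.val j), sum_update_of_mem hmem,
    sum_eq_add_sum_sdiff_singleton_of_mem hmem (fun j => θ.val j (π j))]
  ring

lemma SW_add_SW_le_of_transfer (hθ : θ.Valid s) {x y : V → ℕ} {c : V} (hc : c ≠ s)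
    (hlt : x c < y c) (hy : y c ≤ k) :
    SW θ s x + SW θ s y ≤ SW θ s (update x c (x c + 1)) + SW θ s (update y c (y c - 1)) := by
  have h := (hθ c hc).marginal_antitone (p := x c) (q := y c - 1) (by omega) (by omega)
  rw [Nat.sub_add_cancel (by omega)] at h
  rw [SW_update θ s x hc, SW_update θ s y hc]
  linarith

lemma update_mem_feasAllocs {B : Set V} {ρ π : V → ℕ} (hπ : π ∈ feasAllocs θ s B ρ) {c : V}
    (hc : c ∈ θ.feasible s B) {m : ℕ} (hm : ρ c ≤ m)
    (hsum : ∑ j ∈ univ.erase s, π j + m ≤ k + π c) : update π c m ∈ feasAllocs θ s B ρ := by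
  refine ⟨?_, ?_, fun j hj => ?_, fun j hj => ?_⟩
  · rw [update_of_ne (Ne.symm hc.1)]
    exact hπ.1
  · have := sum_update_add s π hc.1 m
    omega
  · rw [update_of_ne (by rintro rfl; exact hj hc)]
    exact hπ.2.2.1 j hj
  · rcases eq_or_ne j c with rfl | hjc
    · simpa using hm
    · rw [update_of_ne hjc]
      exact hπ.2.2.2 j hj

lemma mem_feasAllocs_update_succ {B : Set V} {ρ π : V → ℕ} {a : V} (ha : a ≠ s) :
    π ∈ feasAllocs θ s B (update ρ a (ρ a + 1)) ↔ π ∈ feasAllocs θ s B ρ ∧ ρ a + 1 ≤ π a := by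
  constructor
  · intro h
    refine ⟨mem_feasAllocs_of_le θ s h fun j hj => ?_, by simpa using h.2.2.2 a ha⟩
    refine le_trans ?_ (h.2.2.2 j hj)
    rcases eq_or_ne j a with rfl | hja <;> simp [*]
  · rintro ⟨h, hπa⟩
    refine mem_feasAllocs_of_le θ s h fun j hj => ?_
    rcases eq_or_ne j a with rfl | hja
    · simpa using hπa
    · rw [update_of_ne hja]
      exact h.2.2.2 j hj

lemma exists_exchange_of_not_sold_out (hθ : θ.Valid s) {C D : Set V} (hCD : C ⊆ D)
    {ρ α β : V → ℕ} {a : V} (ha : a ∈ θ.feasible s C) (hα : α ∈ feasAllocs θ s D ρ)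
    (hβ : β ∈ feasAllocs θ s C ρ) (hβa : β a < α a) (hβk : ∑ j ∈ univ.erase s, β j < k) :
    ∃ γ ∈ feasAllocs θ s D ρ, ∃ δ ∈ feasAllocs θ s C ρ, δ a = β a + 1 ∧
      SW θ s α + SW θ s β ≤ SW θ s γ + SW θ s δ := by
  have hαk := hα.2.1
  have hρa := hβ.2.2.2 a ha.1
  have hαsum := sum_update_add s α ha.1 (α a - 1)
  have hαa := apply_le_sum_of_mem_feasAllocs θ s hα a
  refine ⟨update α a (α a - 1), ?_, update β a (β a + 1), ?_, by simp, ?_⟩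
  · exact update_mem_feasAllocs θ s hα (θ.feasible_mono s hCD ha) (by omega) (by omega)
  · exact update_mem_feasAllocs θ s hβ ha (by omega) (by omega)
  · linarith [SW_add_SW_le_of_transfer θ s hθ ha.1 hβa (by omega)]

lemma exists_exchange_of_sold_out (hθ : θ.Valid s) {C D : Set V} (hCD : C ⊆ D)
    {ρ α β : V → ℕ} {a : V} (ha : a ∈ θ.feasible s C) (hα : α ∈ feasAllocs θ s D ρ)
    (hβ : β ∈ feasAllocs θ s C ρ) (hβa : β a < α a) (hβk : k ≤ ∑ j ∈ univ.erase s, β j) :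
    ∃ γ ∈ feasAllocs θ s D ρ, ∃ δ ∈ feasAllocs θ s C ρ, δ a = β a + 1 ∧
      SW θ s α + SW θ s β ≤ SW θ s γ + SW θ s δ := by
  have hαk := hα.2.1
  have hβk' := hβ.2.1
  have hρa := hβ.2.2.2 a ha.1
  have hαa := apply_le_sum_of_mem_feasAllocs θ s hα a
  -- `β` gives `a` less than `α` does but sells out, so it gives some `c` more
  obtain ⟨c, hc, hαc⟩ : ∃ c ∈ univ.erase s, α c < β c := by
    by_contra! h
    have := sum_lt_sum h ⟨a, mem_erase.2 ⟨ha.1, mem_univ _⟩, hβa⟩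
    omega
  have hcs := (mem_erase.1 hc).1
  have hca : c ≠ a := by rintro rfl; omega
  have hcC : c ∈ θ.feasible s C := by
    by_contra h
    have := hβ.2.2.1 c h
    omega
  have hρc := hα.2.2.2 c hcs
  have hβc := apply_le_sum_of_mem_feasAllocs θ s hβ c
  -- move one unit of `a` from `α` to `β` and one unit of `c` back
  set γ := update α a (α a - 1)
  set β' := update β c (β c - 1) with hβ'
  have hγsum : ∑ j ∈ univ.erase s, γ j + α a = ∑ j ∈ univ.erase s, α j + (α a - 1) :=
    sum_update_add s α ha.1 (α a - 1)
  have hβ'sum : ∑ j ∈ univ.erase s, β' j + β c = ∑ j ∈ univ.erase s, β j + (β c - 1) :=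
    sum_update_add s β hcs (β c - 1)
  have hγc : γ c = α c := update_of_ne hca _ _
  have hβ'a : β' a = β a := update_of_ne (Ne.symm hca) _ _
  have hγ : γ ∈ feasAllocs θ s D ρ :=
    update_mem_feasAllocs θ s hα (θ.feasible_mono s hCD ha) (by omega) (by omega)
  have hβ'mem : β' ∈ feasAllocs θ s C ρ := update_mem_feasAllocs θ s hβ hcC (by omega) (by omega)
  refine ⟨update γ c (γ c + 1), ?_, update β' a (β a + 1), ?_, by simp, ?_⟩
  · exact update_mem_feasAllocs θ s hγ (θ.feasible_mono s hCD hcC) (by omega) (by omega)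
  · exact update_mem_feasAllocs θ s hβ'mem ha (by omega) (by omega)
  · have h₁ := SW_add_SW_le_of_transfer θ s hθ ha.1 hβa (by omega)
    have h₂ := SW_add_SW_le_of_transfer θ s hθ hcs (x := γ) (y := update β a (β a + 1))
      (by simp [hγc, update_of_ne hca]; omega) (by simp [update_of_ne hca]; omega)
    rw [update_of_ne hca, update_comm (Ne.symm hca) _ _ β, ← hβ'] at h₂
    linarith

lemma exists_exchange (hθ : θ.Valid s) {C D : Set V} (hCD : C ⊆ D) {ρ α β : V → ℕ} {a : V}
    (ha : a ∈ θ.feasible s C) (hα : α ∈ feasAllocs θ s D (update ρ a (ρ a + 1)))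
    (hβ : β ∈ feasAllocs θ s C ρ) :
    ∃ γ ∈ feasAllocs θ s D ρ, ∃ δ ∈ feasAllocs θ s C (update ρ a (ρ a + 1)),
      SW θ s α + SW θ s β ≤ SW θ s γ + SW θ s δ := by
  obtain ⟨hα, hαa⟩ := (mem_feasAllocs_update_succ θ s ha.1).1 hα
  simp only [mem_feasAllocs_update_succ θ s ha.1]
  rcases lt_or_ge (ρ a) (β a) with hβa | hβa
  · exact ⟨α, hα, β, ⟨hβ, hβa⟩, le_rfl⟩
  replace hβa : β a = ρ a := le_antisymm hβa (hβ.2.2.2 a ha.1)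
  obtain ⟨γ, hγ, δ, hδ, hδa, h⟩ := (lt_or_ge (∑ j ∈ univ.erase s, β j) k).elim
    (exists_exchange_of_not_sold_out θ s hθ hCD ha hα hβ (by omega))
    (exists_exchange_of_sold_out θ s hθ hCD ha hα hβ (by omega))
  exact ⟨γ, hγ, δ, ⟨hδ, by omega⟩, h⟩

lemma SWstar_exchange (hθ : θ.Valid s) {C D : Set V} (hCD : C ⊆ D) {ρ : V → ℕ}
    (hρ : ρ ∈ feasAllocs θ s C ρ) {a : V} (ha : a ∈ θ.feasible s C)
    (hk : ∑ j ∈ univ.erase s, ρ j < k) :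
    SWstar θ s D (update ρ a (ρ a + 1)) + SWstar θ s C ρ
      ≤ SWstar θ s D ρ + SWstar θ s C (update ρ a (ρ a + 1)) := by
  have hρ' : update ρ a (ρ a + 1) ∈ feasAllocs θ s C (update ρ a (ρ a + 1)) :=
    (mem_feasAllocs_update_succ θ s ha.1).2
      ⟨update_mem_feasAllocs θ s hρ ha (by omega) (by omega), by simp⟩
  obtain ⟨hα, hαSW⟩ := bestAlloc_spec θ s ⟨_, feasAllocs_mono θ s hCD _ hρ'⟩
  obtain ⟨hβ, hβSW⟩ := bestAlloc_spec θ s ⟨_, hρ⟩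
  obtain ⟨γ, hγ, δ, hδ, h⟩ := exists_exchange θ s hθ hCD ha hα hβ
  rw [← hαSW, ← hβSW]
  linarith [SW_le_SWstar θ s hγ, SW_le_SWstar θ s hδ]

lemma SWstar_sub_SWstar_le (hθ : θ.Valid s) {C D : Set V} (hCD : C ⊆ D) {ρ : V → ℕ}
    (hρ : ρ ∈ feasAllocs θ s C ρ) :
    SWstar θ s D ρ - SWstar θ s C ρ ≤ SWstar θ s D 0 - SWstar θ s C 0 := by
  obtain ⟨n, hn⟩ : ∃ n, ∑ j ∈ univ.erase s, ρ j = n := ⟨_, rfl⟩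
  induction n generalizing ρ with
  | zero =>
    have : ρ = 0 := funext fun j => by
      rcases eq_or_ne j s with rfl | hj
      · exact hρ.1
      · exact (sum_eq_zero_iff.1 hn) j (mem_erase.2 ⟨hj, mem_univ _⟩)
    rw [this]
  | succ n ih =>
    obtain ⟨a, has, hpos⟩ : ∃ a ∈ univ.erase s, 0 < ρ a := by
      by_contra! h
      have := sum_eq_zero fun j hj => Nat.le_zero.1 (h j hj)
      omega
    have ha : a ∈ θ.feasible s C := by
      by_contra h
      have := hρ.2.2.1 a h
      omega
    set ρ₀ := update ρ a (ρ a - 1)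
    have hsum : ∑ j ∈ univ.erase s, ρ₀ j + ρ a = ∑ j ∈ univ.erase s, ρ j + (ρ a - 1) :=
      sum_update_add s ρ ha.1 (ρ a - 1)
    have hρk := hρ.2.1
    have hρ₀ : ρ₀ ∈ feasAllocs θ s C ρ₀ := by
      refine update_mem_feasAllocs θ s (mem_feasAllocs_of_le θ s hρ fun j _ => ?_) ha
        (by simp [ρ₀]) (by omega)
      rcases eq_or_ne j a with rfl | hja <;> simp [ρ₀, *]
    have hρ₀a : update ρ₀ a (ρ₀ a + 1) = ρ := by
      simp [ρ₀, Nat.sub_add_cancel hpos]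
    have hex := SWstar_exchange θ s hθ hCD hρ₀ ha (by omega)
    rw [hρ₀a] at hex
    linarith [ih hρ₀ (by omega)]

end Exchange

section Run

variable (θ : Profile V k) (s : V) (o : V ≃ Fin (Fintype.card V))

lemma pdaStep_succ_self (a : V) :
    pdaStep θ s o (o a + 1) =
      if a = s then pdaStep θ s o (o a)
      else update (pdaStep θ s o (o a)) a
        (bestAlloc θ s (predeq o a) (pdaStep θ s o (o a)) a) := by
  rw [pdaStep, dif_pos (o a).isLt]
  simp

lemma pdaStep_succ_of_le {t : ℕ} (h : Fintype.card V ≤ t) :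
    pdaStep θ s o (t + 1) = pdaStep θ s o t := by
  rw [pdaStep, dif_neg (not_lt.2 h)]

lemma pdaStep_succ_apply_of_ne {t : ℕ} {j : V} (hj : (o j : ℕ) ≠ t) :
    pdaStep θ s o (t + 1) j = pdaStep θ s o t j := by
  rcases lt_or_ge t (Fintype.card V) with h | h
  · obtain ⟨a, rfl⟩ : ∃ a, (o a : ℕ) = t := ⟨o.symm ⟨t, h⟩, by simp⟩
    rw [pdaStep_succ_self]
    split_ifs
    · rfl
    · exact update_of_ne (fun hja => hj (by rw [hja])) _ _
  · rw [pdaStep_succ_of_le θ s o h]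

lemma pdaStep_apply_of_le {a : V} {t : ℕ} (ht : t ≤ o a) : pdaStep θ s o t a = 0 := by
  induction t with
  | zero => rfl
  | succ t ih => rw [pdaStep_succ_apply_of_ne θ s o (by omega), ih (by omega)]

lemma pdaStep_apply_of_lt {a : V} {t : ℕ} (ht : (o a : ℕ) < t) :
    pdaStep θ s o t a = pdaStep θ s o (o a + 1) a := by
  induction t, ht using Nat.le_induction with
  | base => rfl
  | succ t ht ih => rw [pdaStep_succ_apply_of_ne θ s o (by omega), ih]

lemma pdaStep_mem_feasAllocs (t : ℕ) :
    pdaStep θ s o t ∈ feasAllocs θ s {a | (o a : ℕ) < t} (pdaStep θ s o t) := by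
  induction t with
  | zero => exact ⟨rfl, by simp [pdaStep], fun _ _ => rfl, fun _ _ => le_rfl⟩
  | succ t ih =>
    have hsub : ∀ t, {a | (o a : ℕ) < t} ⊆ {a | (o a : ℕ) < t + 1} :=
      fun _ => Set.ofPred_subset_ofPred.2 fun _ => Nat.lt_succ_of_lt
    have hmono := feasAllocs_mono θ s (hsub t) (pdaStep θ s o t)
    rcases lt_or_ge t (Fintype.card V) with h | h
    · obtain ⟨a, rfl⟩ : ∃ a, (o a : ℕ) = t := ⟨o.symm ⟨t, h⟩, by simp⟩
      have hpre := predeq_eq_setOf o a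
      rw [pdaStep_succ_self]
      split_ifs with has
      · exact hmono ih
      set f := pdaStep θ s o (o a)
      obtain ⟨hβ, -⟩ := bestAlloc_spec θ s ⟨f, hpre ▸ hmono ih⟩
      set β := bestAlloc θ s (predeq o a) f
      refine ⟨by rw [update_of_ne (Ne.symm has)]; exact ih.1, ?_, fun j hj => ?_,
        fun _ _ => le_rfl⟩
      · refine le_trans (sum_le_sum fun j hj => ?_) hβ.2.1
        rcases eq_or_ne j a with rfl | hja
        · simp
        · rw [update_of_ne hja]
          exact hβ.2.2.2 j (mem_erase.1 hj).1
      · rcases eq_or_ne j a with rfl | hja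
        · rw [update_self]
          exact hβ.2.2.1 j (hpre ▸ hj)
        · rw [update_of_ne hja]
          exact ih.2.2.1 j (hj <| θ.feasible_mono s (hsub _) ·)
    · rw [pdaStep_succ_of_le θ s o h]
      exact hmono ih

lemma pdaPrior_mem_feasAllocs (i : V) :
    pdaPrior θ s o i ∈ feasAllocs θ s (pred o i) (pdaPrior θ s o i) := by
  rw [pred_eq_setOf]
  exact pdaStep_mem_feasAllocs θ s o _

lemma pdaPrior_mem_feasAllocs_predeq (i : V) :
    pdaPrior θ s o i ∈ feasAllocs θ s (predeq o i) (pdaPrior θ s o i) :=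
  feasAllocs_mono θ s (pred_subset_predeq o i) _ (pdaPrior_mem_feasAllocs θ s o i)

lemma pdaAlloc_eq_bestAlloc {i : V} (hi : i ≠ s) :
    pdaAlloc θ s o i = bestAlloc θ s (predeq o i) (pdaPrior θ s o i) i := by
  rw [pdaAlloc, pdaStep_apply_of_lt θ s o (o i).isLt, pdaStep_succ_self, if_neg hi,
    update_self, pdaPrior]

lemma pdaUtil_eq_zero_of_sold_out (hθ : θ.Valid s) {i : V} (hi : i ≠ s)
    (h : ∑ j ∈ univ.erase s, pdaPrior θ s o i j = k) : pdaUtil (θ.val i) θ s o i = 0 := by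
  obtain ⟨hβ, -⟩ := bestAlloc_spec θ s ⟨_, pdaPrior_mem_feasAllocs_predeq θ s o i⟩
  have hprior : pdaPrior θ s o i i = 0 := pdaStep_apply_of_le θ s o le_rfl
  have hzero : pdaAlloc θ s o i = 0 := by
    rw [pdaAlloc_eq_bestAlloc θ s o hi]
    by_contra hne
    have := sum_lt_sum (fun j hj => hβ.2.2.2 j (mem_erase.1 hj).1)
      ⟨i, mem_erase.2 ⟨hi, mem_univ _⟩, by omega⟩
    have := hβ.2.1
    omega
  simp [pdaUtil, pdaPay, hi, h, hzero, (hθ i hi).1]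

lemma pdaUtil_eq_of_not_sold_out {i : V} (hi : i ≠ s)
    (h : ∑ j ∈ univ.erase s, pdaPrior θ s o i j ≠ k) :
    pdaUtil (θ.val i) θ s o i
      = SWstar θ s (predeq o i) (pdaPrior θ s o i) - SWstar θ s (pred o i) (pdaPrior θ s o i) := by
  simp only [pdaUtil, pdaPay, if_neg hi, if_neg h]
  ring

lemma pdaUtil_nonneg (hθ : θ.Valid s) {i : V} (hi : i ≠ s) : 0 ≤ pdaUtil (θ.val i) θ s o i := by
  by_cases h : ∑ j ∈ univ.erase s, pdaPrior θ s o i j = k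
  · rw [pdaUtil_eq_zero_of_sold_out θ s o hθ hi h]
  · rw [pdaUtil_eq_of_not_sold_out θ s o hi h, sub_nonneg]
    exact SWstar_mono θ s (pred_subset_predeq o i) (pdaPrior_mem_feasAllocs θ s o i)

lemma pdaUtil_le (hθ : θ.Valid s) {i : V} (hi : i ≠ s) :
    pdaUtil (θ.val i) θ s o i ≤ SWstar θ s (predeq o i) 0 - SWstar θ s (pred o i) 0 := by
  by_cases h : ∑ j ∈ univ.erase s, pdaPrior θ s o i j = k
  · rw [pdaUtil_eq_zero_of_sold_out θ s o hθ hi h, sub_nonneg]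
    exact SWstar_zero_mono θ s (pred_subset_predeq o i)
  · rw [pdaUtil_eq_of_not_sold_out θ s o hi h]
    exact SWstar_sub_SWstar_le θ s hθ (pred_subset_predeq o i) (pdaPrior_mem_feasAllocs θ s o i)

lemma pdaUtil_eq_of_pdaPrior_eq_zero (hk : 1 ≤ k) {i : V} (hi : i ≠ s)
    (h : pdaPrior θ s o i = 0) :
    pdaUtil (θ.val i) θ s o i = SWstar θ s (predeq o i) 0 - SWstar θ s (pred o i) 0 := by
  rw [pdaUtil_eq_of_not_sold_out θ s o hi (by simp [h]; omega), h]

lemma pdaStep_eq_zero_iff (t : ℕ) :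
    pdaStep θ s o t = 0 ↔
      ∀ a, (o a : ℕ) < t → a ≠ s → bestAlloc θ s (predeq o a) 0 a = 0 := by
  induction t with
  | zero => exact iff_of_true rfl fun _ h => absurd h (Nat.not_lt_zero _)
  | succ t ih =>
    rcases lt_or_ge t (Fintype.card V) with h | h
    · obtain ⟨b, rfl⟩ : ∃ b, (o b : ℕ) = t := ⟨o.symm ⟨t, h⟩, by simp⟩
      have hlt : ∀ a, (o a : ℕ) < o b + 1 ↔ (o a : ℕ) < o b ∨ a = b := fun a => by
        rw [Nat.lt_succ_iff_lt_or_eq, Fin.val_inj, o.apply_eq_iff_eq]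
      simp only [hlt, or_imp, forall_and, forall_eq, ← ih]
      rw [pdaStep_succ_self]
      split_ifs with hbs
      · simp [hbs]
      set f := pdaStep θ s o (o b)
      constructor
      · intro h0
        have hf : f = 0 := funext fun j => by
          rcases eq_or_ne j b with rfl | hj
          · exact pdaStep_apply_of_le θ s o le_rfl
          · simpa [update_of_ne hj] using congrFun h0 j
        refine ⟨hf, fun _ => ?_⟩
        simpa [hf] using congrFun h0 b
      · rintro ⟨hf, hb⟩
        rw [hf, hb hbs]
        simp
    · have hlt : ∀ a, (o a : ℕ) < t + 1 ↔ (o a : ℕ) < t := fun a => by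
        have := (o a).isLt
        omega
      rw [pdaStep_succ_of_le θ s o h, ih]
      simp only [hlt]

lemma pdaStep_restrict (hθ : θ.Valid s) {B : Set V} {t : ℕ}
    (hB : ∀ a, (o a : ℕ) < t → a ∈ B) : pdaStep (θ.restrict B) s o t = pdaStep θ s o t := by
  induction t with
  | zero => rfl
  | succ t ih =>
    rcases lt_or_ge t (Fintype.card V) with h | h
    · obtain ⟨b, rfl⟩ : ∃ b, (o b : ℕ) = t := ⟨o.symm ⟨t, h⟩, by simp⟩
      have hsub : predeq o b ⊆ B := by
        rw [predeq_eq_setOf]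
        exact fun a => hB a
      rw [pdaStep_succ_self, pdaStep_succ_self, ih fun a ha => hB a (by omega),
        bestAlloc_restrict θ s hθ, Set.inter_eq_left.2 hsub]
    · rw [pdaStep_succ_of_le _ s o h, pdaStep_succ_of_le _ s o h, ih fun a ha => hB a (by omega)]

lemma pdaStep_restrict_succ_of_notMem {B : Set V} {b : V} (hb : b ∉ B) :
    pdaStep (θ.restrict B) s o (o b + 1) = pdaStep (θ.restrict B) s o (o b) := by
  rw [pdaStep_succ_self]
  split_ifs
  · rfl
  have hne : (feasAllocs (θ.restrict B) s (predeq o b)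
      (pdaStep (θ.restrict B) s o (o b))).Nonempty :=
    ⟨_, pdaPrior_mem_feasAllocs_predeq _ s o b⟩
  rw [bestAlloc_apply_of_notMem_feasible _ s hne
    fun h => hb (θ.restrict_feasible_subset s B _ h)]
  exact update_eq_self_iff.2 (pdaStep_apply_of_le _ s o le_rfl).symm

lemma pdaAlloc_restrict_eq_pdaPrior (hθ : θ.Valid s) {i : V} {B : Set V} (hB : pred o i = B) :
    pdaAlloc (θ.restrict B) s o = pdaPrior θ s o i := by
  have hmem : ∀ a, (o a : ℕ) < o i ↔ a ∈ B := fun a => by rw [← hB]; rfl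
  rw [pdaPrior, ← pdaStep_restrict θ s o hθ fun a => (hmem a).1, pdaAlloc]
  suffices ∀ t, (o i : ℕ) ≤ t →
      pdaStep (θ.restrict B) s o t = pdaStep (θ.restrict B) s o (o i) from
    this _ (o i).isLt.le
  intro t ht
  induction t, ht using Nat.le_induction with
  | base => rfl
  | succ t ht ih =>
    rcases lt_or_ge t (Fintype.card V) with h | h
    · obtain ⟨b, rfl⟩ : ∃ b, (o b : ℕ) = t := ⟨o.symm ⟨t, h⟩, by simp⟩
      rw [pdaStep_restrict_succ_of_notMem θ s o fun hb => by have := (hmem b).2 hb; omega, ih]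
    · rw [pdaStep_succ_of_le _ s o h, ih]

end Run

section Coalition

variable (θ : Profile V k) (s : V)

lemma pdaAlloc_restrict_eq_zero_iff (hθ : θ.Valid s) (B : Finset V)
    (o : V ≃ Fin (Fintype.card V)) :
    pdaAlloc (θ.restrict ↑B) s o = 0 ↔
      ∀ a ∈ B, a ≠ s → bestAlloc θ s (predeq o a ∩ ↑B) 0 a = 0 := by
  rw [pdaAlloc, pdaStep_eq_zero_iff]
  simp only [bestAlloc_restrict θ s hθ]
  refine ⟨fun h a _ has => h a (o a).isLt has, fun h a _ has => ?_⟩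
  by_cases haB : a ∈ B
  · exact h a haB has
  · exact bestAlloc_apply_of_notMem_feasible θ s ⟨0, zero_mem_feasAllocs θ s _⟩
      fun hf => haB (θ.feasible_subset s _ hf).2

lemma pdaAlloc_restrict_eq_zero_congr (hθ : θ.Valid s) {B : Finset V}
    {o o' : V ≃ Fin (Fintype.card V)} (h : relOrder o B = relOrder o' B) :
    pdaAlloc (θ.restrict ↑B) s o = 0 ↔ pdaAlloc (θ.restrict ↑B) s o' = 0 := by
  simp only [pdaAlloc_restrict_eq_zero_iff θ s hθ]
  exact forall₂_congr fun a ha => by rw [predeq_inter_eq_of_relOrder_eq h ha]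

lemma card_pdaAlloc_restrict_eq_zero_mul_le (hθ : θ.Valid s) {B : Finset V} {i : V}
    (hi : i ∉ B) :
    #{o : V ≃ Fin (Fintype.card V) | pdaAlloc (θ.restrict ↑B) s o = 0}
        * ((#B)! * (Fintype.card V - #B - 1)!)
      ≤ (Fintype.card V)! *
        #{o : V ≃ Fin (Fintype.card V) | predFinset o i = B ∧ pdaPrior θ s o i = 0} := by
  classical
  let P : ({x // x ∈ B} ≃ Fin #B) → Prop :=
    fun σ => ∃ o, relOrder o B = σ ∧ pdaAlloc (θ.restrict ↑B) s o = 0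
  have hP : ∀ o, P (relOrder o B) ↔ pdaAlloc (θ.restrict ↑B) s o = 0 := fun o =>
    ⟨fun ⟨_, h, h'⟩ => (pdaAlloc_restrict_eq_zero_congr θ s hθ h).1 h', fun h => ⟨o, rfl, h⟩⟩
  have := card_mul_le_card_predFinset_eq hi P
  rwa [filter_congr fun o _ => hP o, filter_congr fun o _ => and_congr_right fun ho =>
    (hP o).trans (by rw [pdaAlloc_restrict_eq_pdaPrior θ s o hθ (by rw [← ho, coe_predFinset])])]
    at this

lemma mu_eq_card_div (ψ : Profile V k) :
    mu ψ s = #{o : V ≃ Fin (Fintype.card V) | pdaAlloc ψ s o = 0} / ((Fintype.card V)! : ℝ) := by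
  rw [mu, Nat.card_eq_fintype_card, Fintype.card_subtype]
  simp only [← funext_iff]
  rfl

variable {θ s}

lemma sum_pdaUtil_of_predFinset_eq_le (hθ : θ.Valid s) {i : V} (hi : i ≠ s) {B : Finset V}
    (hB : B ∈ (univ.erase i).powerset) :
    ∑ o ∈ {o : V ≃ Fin (Fintype.card V) | predFinset o i = B}, pdaUtil (θ.val i) θ s o i
      ≤ ((#B)! * (Fintype.card V - #B - 1)! : ℝ) *
        (SWstar θ s ↑(insert i B) 0 - SWstar θ s ↑B 0) := by
  calc _ ≤ ∑ o ∈ {o : V ≃ Fin (Fintype.card V) | predFinset o i = B},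
        (SWstar θ s ↑(insert i B) 0 - SWstar θ s ↑B 0) := sum_le_sum fun o ho => by
          have hpred : pred o i = ↑B := by rw [← coe_predFinset, (mem_filter.1 ho).2]
          simpa [hpred, predeq_eq_insert_pred] using pdaUtil_le θ s o hθ hi
    _ = _ := by
      rw [sum_const, card_predFinset_eq hB, nsmul_eq_mul]
      push_cast
      ring

lemma le_sum_pdaUtil_of_predFinset_eq (hθ : θ.Valid s) (hk : 1 ≤ k) {i : V} (hi : i ≠ s)
    {B : Finset V} (hiB : i ∉ B) :
    ((#B)! * (Fintype.card V - #B - 1)! : ℝ) * mu (θ.restrict ↑B) s *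
        (SWstar θ s ↑(insert i B) 0 - SWstar θ s ↑B 0)
      ≤ ∑ o ∈ {o : V ≃ Fin (Fintype.card V) | predFinset o i = B}, pdaUtil (θ.val i) θ s o i := by
  set Δ := SWstar θ s ↑(insert i B) 0 - SWstar θ s ↑B 0
  have hΔ : 0 ≤ Δ := sub_nonneg.2 (SWstar_zero_mono θ s (by simp))
  have hcount : ((#B)! * (Fintype.card V - #B - 1)! : ℝ) * mu (θ.restrict ↑B) s
      ≤ #{o : V ≃ Fin (Fintype.card V) | predFinset o i = B ∧ pdaPrior θ s o i = 0} := by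
    rw [mu_eq_card_div, mul_div_assoc', div_le_iff₀ (by positivity)]
    exact_mod_cast (Nat.mul_comm _ _).trans_le
      ((card_pdaAlloc_restrict_eq_zero_mul_le θ s hθ hiB).trans_eq (Nat.mul_comm _ _))
  calc _ ≤ #{o : V ≃ Fin (Fintype.card V) | predFinset o i = B ∧ pdaPrior θ s o i = 0} * Δ :=
        mul_le_mul_of_nonneg_right hcount hΔ
    _ = ∑ o ∈ {o : V ≃ Fin (Fintype.card V) | predFinset o i = B ∧ pdaPrior θ s o i = 0},
          pdaUtil (θ.val i) θ s o i := by
        rw [← nsmul_eq_mul, ← sum_const]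
        refine sum_congr rfl fun o ho => ?_
        obtain ⟨hpred, hprior⟩ := (mem_filter.1 ho).2
        rw [pdaUtil_eq_of_pdaPrior_eq_zero θ s o hk hi hprior, predeq_eq_insert_pred,
          ← coe_predFinset, hpred, ← coe_insert]
    _ ≤ _ := by
        rw [← filter_filter]
        exact sum_le_sum_of_subset_of_nonneg (filter_subset _ _)
          fun o _ _ => pdaUtil_nonneg θ s o hθ hi

lemma pdaExpUtil_eq_sum (i : V) :
    pdaExpUtil (θ.val i) θ s i = ∑ B ∈ (univ.erase i).powerset,
      (∑ o ∈ {o : V ≃ Fin (Fintype.card V) | predFinset o i = B}, pdaUtil (θ.val i) θ s o i)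
        / (Fintype.card V)! := by
  rw [pdaExpUtil, ← sum_div, sum_fiberwise_of_maps_to fun o _ => predFinset_mem_powerset o i]

lemma sum_mul_mu_le_pdaExpUtil (hθ : θ.Valid s) (hk : 1 ≤ k) {i : V} (hi : i ≠ s) :
    ∑ B ∈ (univ.erase i).powerset,
        ((B.card.factorial * (Fintype.card V - B.card - 1).factorial : ℝ) /
          ((Fintype.card V).factorial : ℝ)) * mu (θ.restrict ↑B) s *
        (SWstar θ s (↑(insert i B)) 0 - SWstar θ s (↑B) 0)
      ≤ pdaExpUtil (θ.val i) θ s i := by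
  rw [pdaExpUtil_eq_sum]
  refine sum_le_sum fun B hB => ?_
  rw [div_mul_eq_mul_div, div_mul_eq_mul_div, div_le_div_iff_of_pos_right (by positivity)]
  exact le_sum_pdaUtil_of_predFinset_eq hθ hk hi fun h => by simpa using mem_powerset.1 hB h

lemma iInf_mu_mul_shapley_le (i : V) :
    (⨅ B : Finset V, mu (θ.restrict ↑B) s) * shapley θ s i
      ≤ ∑ B ∈ (univ.erase i).powerset,
        ((B.card.factorial * (Fintype.card V - B.card - 1).factorial : ℝ) /
          ((Fintype.card V).factorial : ℝ)) * mu (θ.restrict ↑B) s *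
        (SWstar θ s (↑(insert i B)) 0 - SWstar θ s (↑B) 0) := by
  rw [shapley, mul_sum]
  refine sum_le_sum fun B _ => ?_
  have hΔ : 0 ≤ SWstar θ s ↑(insert i B) 0 - SWstar θ s ↑B 0 :=
    sub_nonneg.2 (SWstar_zero_mono θ s (by simp))
  rw [← mul_assoc, mul_comm (⨅ _, _), mul_assoc, mul_assoc]
  gcongr
  exact ciInf_le (Finite.bddBelow_range _) B

lemma pdaExpUtil_le_shapley (hθ : θ.Valid s) {i : V} (hi : i ≠ s) :
    pdaExpUtil (θ.val i) θ s i ≤ shapley θ s i := by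
  rw [pdaExpUtil_eq_sum, shapley]
  refine sum_le_sum fun B hB => ?_
  rw [div_mul_eq_mul_div, div_le_div_iff_of_pos_right (by positivity)]
  exact sum_pdaUtil_of_predFinset_eq_le hθ hi hB

end Coalition

end DA

/-- For a buyer i reporting her true type, her expected utility in
PDA satisfies
E_PDA(u_i) ≥ Σ_{B ⊆ V∖{i}} [|B|!(|V|−|B|−1)!/|V|!] · μ(θ'_B) · (SW*(θ', B∪{i}) − SW*(θ', B));
consequently (inf_B μ(θ'_B)) · φ_i(θ') ≤ E_PDA(u_i) ≤ φ_i(θ'). -/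
theorem pda_expUtil_shapley_bounds {V : Type*} [Fintype V] [DecidableEq V]
    {k : ℕ} (hk : 1 ≤ k) (θ : DA.Profile V k) (s : V) (hθ : θ.Valid s)
    (i : V) (hi : i ≠ s) :
    (∑ B ∈ (Finset.univ.erase i).powerset,
        ((B.card.factorial * (Fintype.card V - B.card - 1).factorial : ℝ) /
          ((Fintype.card V).factorial : ℝ)) *
        DA.mu (θ.restrict ↑B) s *
        (DA.SWstar θ s (↑(insert i B)) 0 - DA.SWstar θ s (↑B) 0)
      ≤ DA.pdaExpUtil (θ.val i) θ s i)
    ∧ (⨅ B : Finset V, DA.mu (θ.restrict ↑B) s) * DA.shapley θ s i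
        ≤ DA.pdaExpUtil (θ.val i) θ s i
    ∧ DA.pdaExpUtil (θ.val i) θ s i ≤ DA.shapley θ s i := by
  have hlower := DA.sum_mul_mu_le_pdaExpUtil hθ hk hi
  exact ⟨hlower, (DA.iInf_mu_mul_shapley_le i).trans hlower, DA.pdaExpUtil_le_shapley hθ hi⟩
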